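/- arXiv:1903.01258 — 7 statements merged into one kernel-verified Lean document; each statement's English description precedes it below -/
import Mathlib

section
/- The star product ⋆_A on MvPolynomial (Fin n) R is commutative if and only if the matrix A is symmetric: if Aᵀ = A then f ⋆_A g = g ⋆_A f for all polynomials f, g, and conversely, if f ⋆_A g = g ⋆_A f for all f, g, then A_{i j} = A_{j i} for all indices i, j. -/
open MvPolynomial

/-- Iterated formal partial derivative `∂_{i 0} ⋯ ∂_{i (k-1)} f`. -/
noncomputable def pdMulti {n : ℕ} {R : Type*} [CommRing R] {k : ℕ}
    (i : Fin k → Fin n) (f : MvPolynomial (Fin n) R) : MvPolynomial (Fin n) R :=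
  (List.ofFn i).foldl (fun p a => pderiv a p) f

/-- The star product `f ⋆_A g` associated to a matrix `A`. -/
noncomputable def mstar {n : ℕ} {R : Type*} [CommRing R] [Algebra ℚ R]
    (A : Matrix (Fin n) (Fin n) R) (f g : MvPolynomial (Fin n) R) :
    MvPolynomial (Fin n) R :=
  ∑ᶠ k : ℕ, (k.factorial : ℚ)⁻¹ •
    ∑ i : Fin k → Fin n, ∑ j : Fin k → Fin n,
      (∏ r, A (i r) (j r)) • (pdMulti i f * pdMulti j g)

/-
Transposing `A` amounts to exchanging the two multi-indices `i, j` in each term, hence to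
swapping `f` and `g`; so a symmetric `A` gives a commutative product. Conversely only the
terms of order `0` and `1` survive on linear polynomials, so `X a ⋆_A X b = X a X b + A a b`,
and commutativity on the variables forces `A a b = A b a`.
-/

section pdMulti

variable {n : ℕ} {R : Type*} [CommRing R]

theorem pdMulti_fin_zero (i : Fin 0 → Fin n) (f : MvPolynomial (Fin n) R) :
    pdMulti i f = f := rfl

theorem pdMulti_succ {k : ℕ} (i : Fin (k + 1) → Fin n) (f : MvPolynomial (Fin n) R) :
    pdMulti i f = pdMulti (Fin.tail i) (pderiv (i 0) f) := by
  rw [pdMulti, List.ofFn_succ, List.foldl_cons]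
  rfl

theorem pdMulti_fin_one (i : Fin 1 → Fin n) (f : MvPolynomial (Fin n) R) :
    pdMulti i f = pderiv (i 0) f :=
  pdMulti_succ i f

@[simp]
theorem pdMulti_zero_right {k : ℕ} (i : Fin k → Fin n) :
    pdMulti i (0 : MvPolynomial (Fin n) R) = 0 := by
  induction k with
  | zero => rfl
  | succ k ih => rw [pdMulti_succ, map_zero, ih]

theorem pdMulti_X_of_two_le {k : ℕ} (hk : 2 ≤ k) (i : Fin k → Fin n) (a : Fin n) :
    pdMulti i (X a : MvPolynomial (Fin n) R) = 0 := by
  obtain ⟨m, rfl⟩ : ∃ m, k = m + 2 := ⟨k - 2, by omega⟩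
  rw [pdMulti_succ, pdMulti_succ, pderiv_X, Pi.single_apply]
  split_ifs <;> simp

end pdMulti

section mstar

variable {n : ℕ} {R : Type*} [CommRing R] [Algebra ℚ R]

noncomputable def mstarTerm (A : Matrix (Fin n) (Fin n) R) (k : ℕ)
    (f g : MvPolynomial (Fin n) R) : MvPolynomial (Fin n) R :=
  (k.factorial : ℚ)⁻¹ • ∑ i : Fin k → Fin n, ∑ j : Fin k → Fin n,
    (∏ r, A (i r) (j r)) • (pdMulti i f * pdMulti j g)

theorem mstar_eq_finsum_mstarTerm (A : Matrix (Fin n) (Fin n) R)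
    (f g : MvPolynomial (Fin n) R) : mstar A f g = ∑ᶠ k, mstarTerm A k f g := rfl

theorem mstarTerm_transpose (A : Matrix (Fin n) (Fin n) R) (k : ℕ)
    (f g : MvPolynomial (Fin n) R) : mstarTerm A.transpose k f g = mstarTerm A k g f := by
  rw [mstarTerm, mstarTerm, Finset.sum_comm]
  simp only [Matrix.transpose_apply, mul_comm (pdMulti _ f)]

theorem mstar_transpose (A : Matrix (Fin n) (Fin n) R) (f g : MvPolynomial (Fin n) R) :
    mstar A.transpose f g = mstar A g f := by
  simp only [mstar_eq_finsum_mstarTerm, mstarTerm_transpose]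

theorem mstarTerm_zero (A : Matrix (Fin n) (Fin n) R) (f g : MvPolynomial (Fin n) R) :
    mstarTerm A 0 f g = f * g := by
  simp [mstarTerm, pdMulti_fin_zero]

theorem mstarTerm_one (A : Matrix (Fin n) (Fin n) R) (f g : MvPolynomial (Fin n) R) :
    mstarTerm A 1 f g = ∑ a, ∑ b, A a b • (pderiv a f * pderiv b g) := by
  have reindex (F : (Fin 1 → Fin n) → MvPolynomial (Fin n) R) :
      ∑ i, F i = ∑ a, F (fun _ => a) :=
    ((Equiv.funUnique (Fin 1) (Fin n)).symm.sum_comp F).symm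
  simp only [mstarTerm, reindex, pdMulti_fin_one, Fin.prod_univ_one]
  simp

theorem mstarTerm_X_X_of_two_le (A : Matrix (Fin n) (Fin n) R) {k : ℕ} (hk : 2 ≤ k)
    (a b : Fin n) : mstarTerm A k (X a) (X b) = 0 := by
  simp [mstarTerm, pdMulti_X_of_two_le hk]

theorem mstar_X_X (A : Matrix (Fin n) (Fin n) R) (a b : Fin n) :
    mstar A (X a) (X b) = X a * X b + C (A a b) := by
  have hsupp : Function.support (fun k => mstarTerm A k (X a) (X b)) ⊆ ({0, 1} : Finset ℕ) := by
    intro k hk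
    by_contra hk01
    simp only [Finset.coe_insert, Finset.coe_singleton, Set.mem_insert_iff,
      Set.mem_singleton_iff, not_or] at hk01
    exact hk (mstarTerm_X_X_of_two_le A (by omega) a b)
  rw [mstar_eq_finsum_mstarTerm, finsum_eq_sum_of_support_subset _ hsupp,
    Finset.sum_pair zero_ne_one, mstarTerm_zero, mstarTerm_one]
  simp [pderiv_X, Pi.single_apply, smul_eq_C_mul]

end mstar

/-- The star product `⋆_A` is commutative if and only if `A` is symmetric. -/
theorem mstar_comm_iff_symm {n : ℕ} {R : Type*} [CommRing R] [Algebra ℚ R]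
    (A : Matrix (Fin n) (Fin n) R) :
    (A.transpose = A → ∀ f g : MvPolynomial (Fin n) R, mstar A f g = mstar A g f) ∧
    ((∀ f g : MvPolynomial (Fin n) R, mstar A f g = mstar A g f) →
      ∀ i j : Fin n, A i j = A j i) := by
  refine ⟨fun hA f g => ?_, fun hcomm i j => ?_⟩
  · rw [← mstar_transpose, hA]
  · have hXX := hcomm (X i) (X j)
    rw [mstar_X_X, mstar_X_X, mul_comm (X j)] at hXX
    exact C_injective _ _ (add_left_cancel hXX)
end

section
/- For all matrices A, B ∈ Matrix (Fin n) (Fin n) R, the operators satisfy T_A ∘ T_B = T_{A+B} and T_0 = id on MvPolynomial (Fin n) R; consequently each T_A is an R-linear automorphism of MvPolynomial (Fin n) R with inverse T_{−A}. -/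
/-!
The derivations `∂_i` commute (their commutator is a derivation vanishing on the variables), so
`Γ_A` and `Γ_B` commute and `Γ_{A+B} = Γ_A + Γ_B`. Since `Γ_A` lowers the total degree and kills
constants, it restricts to a nilpotent endomorphism of the polynomials of total degree `≤ d`, on
which `T_A` is the exponential `IsNilpotent.exp` of that restriction. The law
`exp (X + Y) = exp X * exp Y` for commuting nilpotents then gives `T_A ∘ T_B = T_{A+B}`, and
`T_0 = exp 0 = id`.
-/

open MvPolynomial

/-- The second-order operator `Γ_A = (1/2) Σ_{i,j} A_{ij} ∂_i ∂_j`. -/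
noncomputable def gammaOp {n : ℕ} {R : Type*} [CommRing R] [Algebra ℚ R]
    (A : Matrix (Fin n) (Fin n) R) (f : MvPolynomial (Fin n) R) :
    MvPolynomial (Fin n) R :=
  (2 : ℚ)⁻¹ • ∑ i : Fin n, ∑ j : Fin n, A i j • pderiv i (pderiv j f)

/-- The operator `T_A = Σ_m (1/m!) Γ_A^m`. -/
noncomputable def topT {n : ℕ} {R : Type*} [CommRing R] [Algebra ℚ R]
    (A : Matrix (Fin n) (Fin n) R) (f : MvPolynomial (Fin n) R) :
    MvPolynomial (Fin n) R :=
  ∑ᶠ m : ℕ, (m.factorial : ℚ)⁻¹ • (gammaOp A)^[m] f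

open Finset

namespace MvPolynomial

theorem pderiv_pderiv_comm {σ R : Type*} [CommRing R] (i j : σ) (f : MvPolynomial σ R) :
    pderiv i (pderiv j f) = pderiv j (pderiv i f) := by
  have : ⁅pderiv i, pderiv j⁆ = (0 : Derivation R (MvPolynomial σ R) (MvPolynomial σ R)) :=
    derivation_ext fun k => by
      classical rw [Derivation.commutator_apply]; simp [pderiv_X, Pi.single_apply, apply_ite]
  rw [← sub_eq_zero, ← Derivation.commutator_apply, this, Derivation.zero_apply]

theorem totalDegree_pderiv_le {σ R : Type*} [CommSemiring R] (i : σ) (f : MvPolynomial σ R) :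
    (pderiv i f).totalDegree ≤ f.totalDegree - 1 := by
  refine Finset.sup_le fun m hm => ?_
  have hcoeff : coeff (m + Finsupp.single i 1) f ≠ 0 := by
    rw [mem_support_iff, coeff_pderiv] at hm
    exact left_ne_zero_of_mul hm
  have hdeg : (m + Finsupp.single i 1).degree ≤ f.totalDegree :=
    le_totalDegree (mem_support_iff.mpr hcoeff)
  rw [map_add, Finsupp.degree_single] at hdeg
  change m.degree ≤ _
  omega

theorem pderiv_eq_zero_of_totalDegree_eq_zero {σ R : Type*} [CommSemiring R] (i : σ)
    {f : MvPolynomial σ R} (h : f.totalDegree = 0) : pderiv i f = 0 := by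
  rw [totalDegree_eq_zero_iff_eq_C.mp h, pderiv_C]

end MvPolynomial

section

variable {n : ℕ} {R : Type*} [CommRing R] [Algebra ℚ R]

noncomputable def gammaEnd (A : Matrix (Fin n) (Fin n) R) :
    Module.End R (MvPolynomial (Fin n) R) :=
  (2 : ℚ)⁻¹ • ∑ i, ∑ j, A i j • ((pderiv i).toLinearMap * (pderiv j).toLinearMap)

theorem coe_gammaEnd (A : Matrix (Fin n) (Fin n) R) : ⇑(gammaEnd A) = gammaOp A := by
  ext f : 1
  simp [gammaEnd, gammaOp, LinearMap.sum_apply]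

theorem gammaEnd_add (A B : Matrix (Fin n) (Fin n) R) :
    gammaEnd (A + B) = gammaEnd A + gammaEnd B := by
  simp only [gammaEnd, Matrix.add_apply, add_smul, sum_add_distrib, smul_add]

theorem commute_gammaEnd (A B : Matrix (Fin n) (Fin n) R) :
    Commute (gammaEnd A) (gammaEnd B) := by
  have hpderiv : ∀ i j : Fin n, Commute (pderiv i).toLinearMap (pderiv j).toLinearMap :=
    fun i j => LinearMap.ext fun f => pderiv_pderiv_comm (R := R) i j f
  refine ((Commute.sum_left _ _ _ fun i _ => Commute.sum_left _ _ _ fun j _ =>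
    Commute.sum_right _ _ _ fun k _ => Commute.sum_right _ _ _ fun l _ => ?_).smul_left _
    ).smul_right _
  have hij_kl := ((hpderiv i k).mul_right (hpderiv i l)).mul_left ((hpderiv j k).mul_right (hpderiv j l))
  exact (hij_kl.smul_left _).smul_right _

theorem totalDegree_gammaOp_le (A : Matrix (Fin n) (Fin n) R) (f : MvPolynomial (Fin n) R) :
    (gammaOp A f).totalDegree ≤ f.totalDegree - 1 :=
  (totalDegree_smul_le _ _).trans <| totalDegree_finsetSum_le fun i _ =>
    totalDegree_finsetSum_le fun j _ => (totalDegree_smul_le _ _).trans <|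
      (totalDegree_pderiv_le i _).trans <| by have := totalDegree_pderiv_le j f; omega

theorem gammaOp_eq_zero_of_totalDegree_eq_zero (A : Matrix (Fin n) (Fin n) R)
    {f : MvPolynomial (Fin n) R} (h : f.totalDegree = 0) : gammaOp A f = 0 := by
  simp [gammaOp, pderiv_eq_zero_of_totalDegree_eq_zero _ h]

theorem gammaEnd_pow_apply_eq_zero (A : Matrix (Fin n) (Fin n) R) {d : ℕ}
    {f : MvPolynomial (Fin n) R} (hf : f.totalDegree ≤ d) : (gammaEnd A ^ (d + 1)) f = 0 := by
  induction d generalizing f with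
  | zero =>
    rw [zero_add, pow_one, coe_gammaEnd, gammaOp_eq_zero_of_totalDegree_eq_zero A (by omega)]
  | succ d ih =>
    rw [pow_succ, Module.End.mul_apply]
    exact ih (by rw [coe_gammaEnd]; have := totalDegree_gammaOp_le A f; omega)

theorem gammaEnd_mem_restrictTotalDegree (A : Matrix (Fin n) (Fin n) R) (d : ℕ) :
    ∀ f ∈ restrictTotalDegree (Fin n) R d, gammaEnd A f ∈ restrictTotalDegree (Fin n) R d := by
  intro f hf
  rw [mem_restrictTotalDegree] at hf ⊢
  rw [coe_gammaEnd]
  exact (totalDegree_gammaOp_le A f).trans (by omega)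

noncomputable def gammaRestrict (A : Matrix (Fin n) (Fin n) R) (d : ℕ) :
    Module.End R (restrictTotalDegree (Fin n) R d) :=
  (gammaEnd A).restrict (gammaEnd_mem_restrictTotalDegree A d)

theorem gammaRestrict_add (A B : Matrix (Fin n) (Fin n) R) (d : ℕ) :
    gammaRestrict (A + B) d = gammaRestrict A d + gammaRestrict B d := by
  ext f : 2
  simp [gammaRestrict, gammaEnd_add]

theorem gammaRestrict_zero (d : ℕ) : gammaRestrict (0 : Matrix (Fin n) (Fin n) R) d = 0 := by
  ext f : 2
  simp [gammaRestrict, gammaEnd]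

theorem commute_gammaRestrict (A B : Matrix (Fin n) (Fin n) R) (d : ℕ) :
    Commute (gammaRestrict A d) (gammaRestrict B d) :=
  LinearMap.restrict_commute (commute_gammaEnd A B) _ _

theorem gammaRestrict_pow_succ_eq_zero (A : Matrix (Fin n) (Fin n) R) (d : ℕ) :
    gammaRestrict A d ^ (d + 1) = 0 := by
  ext ⟨f, hf⟩ : 2
  rw [gammaRestrict, Module.End.pow_restrict, LinearMap.coe_restrict_apply]
  exact gammaEnd_pow_apply_eq_zero A ((mem_restrictTotalDegree _ _ _).mp hf)

theorem isNilpotent_gammaRestrict (A : Matrix (Fin n) (Fin n) R) (d : ℕ) :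
    IsNilpotent (gammaRestrict A d) :=
  ⟨d + 1, gammaRestrict_pow_succ_eq_zero A d⟩

theorem topT_eq_sum (A : Matrix (Fin n) (Fin n) R) {d : ℕ} {f : MvPolynomial (Fin n) R}
    (hf : f.totalDegree ≤ d) :
    topT A f = ∑ m ∈ range (d + 1), (m.factorial : ℚ)⁻¹ • (gammaEnd A ^ m) f := by
  simp only [topT, ← coe_gammaEnd, ← Module.End.coe_pow]
  refine finsum_eq_sum_of_support_subset _ fun m hm => ?_
  rw [coe_range, Set.mem_Iio]
  by_contra! hdm
  rw [Function.mem_support, ← Nat.sub_add_cancel hdm, pow_add, Module.End.mul_apply,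
    gammaEnd_pow_apply_eq_zero A hf, map_zero, smul_zero] at hm
  exact hm rfl

theorem topT_eq_exp (A : Matrix (Fin n) (Fin n) R) {d : ℕ} {f : MvPolynomial (Fin n) R}
    (hf : f ∈ restrictTotalDegree (Fin n) R d) :
    topT A f = IsNilpotent.exp (gammaRestrict A d) ⟨f, hf⟩ := by
  rw [IsNilpotent.exp_eq_sum (gammaRestrict_pow_succ_eq_zero A d), topT_eq_sum A
    ((mem_restrictTotalDegree _ _ _).mp hf), LinearMap.sum_apply, Submodule.coe_sum]
  refine sum_congr rfl fun m _ => ?_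
  rw [LinearMap.smul_apply, Submodule.coe_smul_of_tower, gammaRestrict, Module.End.pow_restrict,
    LinearMap.coe_restrict_apply]

theorem topT_topT (A B : Matrix (Fin n) (Fin n) R) (f : MvPolynomial (Fin n) R) :
    topT A (topT B f) = topT (A + B) f := by
  have hf : f ∈ restrictTotalDegree (Fin n) R f.totalDegree :=
    (mem_restrictTotalDegree _ _ _).mpr le_rfl
  rw [topT_eq_exp B hf, topT_eq_exp A (Subtype.mem _), topT_eq_exp (A + B) hf, Subtype.coe_eta,
    gammaRestrict_add, IsNilpotent.exp_add_of_commute (commute_gammaRestrict A B _)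
      (isNilpotent_gammaRestrict A _) (isNilpotent_gammaRestrict B _), Module.End.mul_apply]

theorem topT_zero_apply (f : MvPolynomial (Fin n) R) :
    topT (0 : Matrix (Fin n) (Fin n) R) f = f := by
  rw [topT_eq_exp 0 ((mem_restrictTotalDegree _ _ _).mpr le_rfl), gammaRestrict_zero,
    IsNilpotent.exp_zero, Module.End.one_apply]

theorem isLinearMap_topT (A : Matrix (Fin n) (Fin n) R) : IsLinearMap R (topT A) := by
  constructor
  · intro f g
    rw [topT_eq_sum A (totalDegree_add f g), topT_eq_sum A (le_max_left _ _),
      topT_eq_sum A (le_max_right _ _), ← sum_add_distrib]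
    simp only [map_add, smul_add]
  · intro r f
    rw [topT_eq_sum A (totalDegree_smul_le r f), topT_eq_sum A le_rfl, smul_sum]
    simp only [map_smul, smul_comm r]

end

/-- `T_A ∘ T_B = T_{A+B}`, `T_0 = id`; consequently each `T_A` is an `R`-linear
automorphism of `MvPolynomial (Fin n) R` with inverse `T_{-A}`. -/
theorem topT_comp_and_aut {n : ℕ} {R : Type*} [CommRing R] [Algebra ℚ R] :
    (∀ A B : Matrix (Fin n) (Fin n) R, topT A ∘ topT B = topT (A + B)) ∧
    topT (0 : Matrix (Fin n) (Fin n) R) = (id : MvPolynomial (Fin n) R → MvPolynomial (Fin n) R) ∧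
    (∀ A : Matrix (Fin n) (Fin n) R,
      IsLinearMap R (topT A) ∧ Function.Bijective (topT A) ∧
      topT (-A) ∘ topT A = id ∧ topT A ∘ topT (-A) = id) := by
  have comp (A B : Matrix (Fin n) (Fin n) R) : topT A ∘ topT B = topT (A + B) :=
    funext (topT_topT A B)
  have zero : topT (0 : Matrix (Fin n) (Fin n) R) = id := funext topT_zero_apply
  refine ⟨comp, zero, fun A => ?_⟩
  have left : topT (-A) ∘ topT A = id := by rw [comp, neg_add_cancel, zero]
  have right : topT A ∘ topT (-A) = id := by rw [comp, add_neg_cancel, zero]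
  exact ⟨isLinearMap_topT A, Function.bijective_iff_has_inverse.mpr ⟨topT (-A),
    Function.leftInverse_iff_comp.mpr left, Function.rightInverse_iff_comp.mpr right⟩, left, right⟩
end

section
/- Let B, C ∈ Matrix (Fin n) (Fin n) R with C symmetric (Cᵀ = C). Then T_C(f ⋆_B g) = (T_C f) ⋆_{B+C} (T_C g) for all polynomials f, g in MvPolynomial (Fin n) R. In particular, for any two symmetric matrices P, Q, the map T_{P−Q} is an isomorphism of unital R-algebras from (MvPolynomial (Fin n) R, ⋆_Q) onto (MvPolynomial (Fin n) R, ⋆_P), with inverse T_{Q−P}. -/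
open MvPolynomial

namespace StarAux

variable {R : Type*} [CommRing R] {σ : Type*}

lemma pderiv_comm (i j : σ) (f : MvPolynomial σ R) :
    pderiv i (pderiv j f) = pderiv j (pderiv i f) := by
  classical
  induction f using MvPolynomial.induction_on' with
  | monomial s a =>
      by_cases h : i = j
      · subst h; rfl
      · simp only [pderiv_monomial]
        rw [Finsupp.tsub_apply, Finsupp.tsub_apply,
          Finsupp.single_eq_of_ne' (Ne.symm h), Finsupp.single_eq_of_ne' h]
        rw [tsub_right_comm]
        simp only [Nat.sub_zero]
        congr 1
        ring
  | add p q hp hq => simp [map_add, hp, hq]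

lemma totalDegree_pderiv_le (i : σ) (f : MvPolynomial σ R) (d : ℕ)
    (h : f.totalDegree ≤ d + 1) : (pderiv i f).totalDegree ≤ d := by
  classical
  conv_lhs => rw [f.as_sum]
  rw [map_sum]
  apply totalDegree_finsetSum_le
  intro v hv
  rw [pderiv_monomial]
  by_cases hvi : v i = 0
  · simp [hvi]
  · refine (totalDegree_monomial_le _ _).trans ?_
    show ((v - Finsupp.single i 1).sum fun _ e => e) ≤ d
    have hv' : (v.sum fun _ e => e) ≤ d + 1 := (le_totalDegree hv).trans h
    have hsplit : v = (v - Finsupp.single i 1) + Finsupp.single i 1 := by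
      ext x
      by_cases hx : x = i
      · subst hx; simp; omega
      · simp [Finsupp.single_eq_of_ne' (Ne.symm hx)]
    have : (v.sum fun _ e => e) = ((v - Finsupp.single i 1).sum fun _ e => e) + 1 := by
      conv_lhs => rw [hsplit]
      rw [Finsupp.sum_add_index' (fun _ => rfl) (fun _ _ _ => rfl)]
      simp [Finsupp.sum_single_index]
    omega

lemma pderiv_eq_zero_of_deg_zero (i : σ) (f : MvPolynomial σ R)
    (h : f.totalDegree = 0) : pderiv i f = 0 := by
  classical
  conv_lhs => rw [f.as_sum]
  rw [map_sum]
  apply Finset.sum_eq_zero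
  intro v hv
  have : v i = 0 := by
    rw [totalDegree_eq_zero_iff] at h
    exact h v hv i
  simp [pderiv_monomial, this]

end StarAux
section B
open StarAux

variable {R : Type*} [CommRing R] {σ : Type*}

namespace StarAux

/-- bundled pderiv as an `R`-linear endomorphism -/
noncomputable def pdE (i : σ) : Module.End R (MvPolynomial σ R) :=
  (pderiv i).toLinearMap

@[simp] lemma pdE_apply (i : σ) (f : MvPolynomial σ R) : pdE i f = pderiv i f := rfl

lemma pdE_commute (i j : σ) : Commute (pdE (R := R) (σ := σ) i) (pdE j) := by
  apply LinearMap.ext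
  intro f
  exact pderiv_comm i j f

/-- second-order operators: decrease degree by 2 and kill degree ≤ 1 -/
def SO (L : Module.End R (MvPolynomial σ R)) : Prop :=
  (∀ (d : ℕ) (f : MvPolynomial σ R), f.totalDegree ≤ d + 2 → (L f).totalDegree ≤ d) ∧
  (∀ f : MvPolynomial σ R, f.totalDegree ≤ 1 → L f = 0)

lemma SO.zero : SO (0 : Module.End R (MvPolynomial σ R)) := by
  constructor <;> intros <;> simp

lemma SO.add {L M : Module.End R (MvPolynomial σ R)} (hL : SO L) (hM : SO M) :
    SO (L + M) := by
  constructor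
  · intro d f h
    simp only [LinearMap.add_apply]
    exact (totalDegree_add _ _).trans (max_le (hL.1 d f h) (hM.1 d f h))
  · intro f h
    simp [LinearMap.add_apply, hL.2 f h, hM.2 f h]

lemma SO.smul {L : Module.End R (MvPolynomial σ R)} (hL : SO L) (r : R) :
    SO (r • L) := by
  constructor
  · intro d f h
    simp only [LinearMap.smul_apply]
    exact (totalDegree_smul_le _ _).trans (hL.1 d f h)
  · intro f h
    simp [LinearMap.smul_apply, hL.2 f h]

lemma SO.sum {ι : Type*} {s : Finset ι} {L : ι → Module.End R (MvPolynomial σ R)}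
    (h : ∀ i ∈ s, SO (L i)) : SO (∑ i ∈ s, L i) := by
  classical
  induction s using Finset.induction_on with
  | empty => simpa using SO.zero
  | insert _ _ hx ih =>
      rw [Finset.sum_insert hx]
      exact (h _ (Finset.mem_insert_self _ _)).add
        (ih fun i hi => h i (Finset.mem_insert_of_mem hi))

lemma SO.pp (i j : σ) : SO (pdE (R := R) i * pdE j) := by
  constructor
  · intro d f h
    simp only [Module.End.mul_apply, pdE_apply]
    exact totalDegree_pderiv_le _ _ _ (totalDegree_pderiv_le _ _ _ (by omega))
  · intro f h
    simp only [Module.End.mul_apply, pdE_apply]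
    have : (pderiv j f).totalDegree = 0 :=
      Nat.le_zero.mp (totalDegree_pderiv_le _ _ 0 h)
    rw [pderiv_eq_zero_of_deg_zero _ _ this]

lemma SO.deg_le {L : Module.End R (MvPolynomial σ R)} (hL : SO L)
    (f : MvPolynomial σ R) : (L f).totalDegree ≤ f.totalDegree := by
  rcases le_or_gt f.totalDegree 1 with h | h
  · simp [hL.2 f h]
  · exact (hL.1 f.totalDegree f (by omega)).trans (le_refl _)

lemma SO.pow_deg_le {L : Module.End R (MvPolynomial σ R)} (hL : SO L)
    (b : ℕ) : ∀ (d : ℕ) (f : MvPolynomial σ R), f.totalDegree ≤ b + d →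
      ((L ^ b) f).totalDegree ≤ d := by
  induction b with
  | zero => intro d f h; simpa using h
  | succ b ih =>
      intro d f h
      rw [pow_succ, Module.End.mul_apply]
      rcases le_or_gt f.totalDegree 1 with h1 | h1
      · rw [hL.2 f h1]; simp
      · exact ih d (L f) (by have := hL.1 (b + d - 1) f (by omega); omega)

lemma SO.pow_eq_zero {L : Module.End R (MvPolynomial σ R)} (hL : SO L) :
    ∀ {m : ℕ} {f : MvPolynomial σ R}, f.totalDegree < m → (L ^ m) f = 0 := by
  intro m
  induction m with
  | zero => intro f h; omega
  | succ k ih =>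
      intro f h
      rw [pow_succ, Module.End.mul_apply]
      rcases le_or_gt f.totalDegree 1 with h1 | h1
      · rw [hL.2 f h1]; simp
      · exact ih (by have := hL.1 (f.totalDegree - 2) f (by omega); omega)

end StarAux
end B
section C

namespace StarAux

variable {R : Type*} [CommRing R] [Algebra ℚ R] {σ : Type*}

/-- coefficient 1/m! -/
noncomputable def cf (R : Type*) [CommRing R] [Algebra ℚ R] (m : ℕ) : R :=
  algebraMap ℚ R ((m.factorial : ℚ)⁻¹)

@[simp] lemma cf_zero : cf R 0 = 1 := by simp [cf]

/-- exponential of a locally nilpotent operator, applied to `f` -/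
noncomputable def expE (L : Module.End R (MvPolynomial σ R)) (f : MvPolynomial σ R) :
    MvPolynomial σ R :=
  ∑ᶠ m : ℕ, cf R m • (L ^ m) f

lemma expE_eq_sum {L : Module.End R (MvPolynomial σ R)} (hL : SO L)
    (f : MvPolynomial σ R) {N : ℕ} (hN : f.totalDegree < N) :
    expE L f = ∑ m ∈ Finset.range N, cf R m • (L ^ m) f := by
  apply finsum_eq_sum_of_support_subset
  intro m hm
  simp only [Function.mem_support, ne_eq] at hm
  simp only [Finset.coe_range, Set.mem_Iio]
  by_contra hc
  exact hm (by rw [hL.pow_eq_zero (lt_of_lt_of_le hN (not_lt.mp hc)), smul_zero])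

lemma cf_mul_choose {m k : ℕ} (h : k ≤ m) :
    cf R m * ((m.choose k : ℕ) : R) = cf R k * cf R (m - k) := by
  have : ((m.choose k : ℕ) : R) = algebraMap ℚ R ((m.choose k : ℕ) : ℚ) := by
    simp [map_natCast]
  rw [this, cf, cf, cf, ← map_mul, ← map_mul]
  congr 1
  rw [Nat.cast_choose ℚ h]
  have h1 : (m.factorial : ℚ) ≠ 0 := Nat.cast_ne_zero.2 m.factorial_ne_zero
  have h2 : (k.factorial : ℚ) ≠ 0 := Nat.cast_ne_zero.2 k.factorial_ne_zero
  have h3 : ((m - k).factorial : ℚ) ≠ 0 := Nat.cast_ne_zero.2 (m - k).factorial_ne_zero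
  field_simp

lemma expE_add {L M : Module.End R (MvPolynomial σ R)} (hL : SO L) (hM : SO M)
    (hc : Commute L M) (f : MvPolynomial σ R) :
    expE (L + M) f = expE L (expE M f) := by
  classical
  set D := f.totalDegree with hD
  set K := D + 1 with hK
  have hvanish : ∀ a b : ℕ, D < a + b → (L ^ a) ((M ^ b) f) = 0 := by
    intro a b h
    rcases lt_or_ge D b with hb | hb
    · rw [hM.pow_eq_zero hb]; simp
    · have hdeg : ((M ^ b) f).totalDegree ≤ D - b :=
        hM.pow_deg_le b (D - b) f (by omega)
      exact hL.pow_eq_zero (by omega)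
  -- RHS
  have hMdeg : (expE M f).totalDegree ≤ D := by
    rw [expE_eq_sum hM f (show f.totalDegree < K by omega)]
    apply totalDegree_finsetSum_le
    intro b _
    exact (totalDegree_smul_le _ _).trans (hM.pow_deg_le b D f (by omega))
  have hRHS : expE L (expE M f) =
      ∑ a ∈ Finset.range K, ∑ b ∈ Finset.range K,
        (cf R a * cf R b) • (L ^ a) ((M ^ b) f) := by
    rw [expE_eq_sum hL (expE M f) (show (expE M f).totalDegree < K by omega)]
    refine Finset.sum_congr rfl fun a _ => ?_
    rw [expE_eq_sum hM f (show f.totalDegree < K by omega), map_sum, Finset.smul_sum]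
    refine Finset.sum_congr rfl fun b _ => ?_
    rw [LinearMap.map_smul, smul_smul]
  -- LHS
  have hterm : ∀ m : ℕ, cf R m • ((L + M) ^ m) f =
      ∑ k ∈ Finset.range (m + 1), (cf R k * cf R (m - k)) • (L ^ k) ((M ^ (m - k)) f) := by
    intro m
    rw [hc.add_pow m, LinearMap.sum_apply, Finset.smul_sum]
    refine Finset.sum_congr rfl fun k hk => ?_
    have hkm : k ≤ m := Nat.lt_succ_iff.mp (Finset.mem_range.mp hk)
    rw [Module.End.mul_apply, Module.End.mul_apply, Module.End.natCast_apply,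
      ← Nat.cast_smul_eq_nsmul R, map_smul, map_smul, smul_smul, cf_mul_choose hkm]
  rw [expE_eq_sum (hL.add hM) f (show f.totalDegree < K by omega), hRHS]
  calc ∑ m ∈ Finset.range K, cf R m • ((L + M) ^ m) f
      = ∑ m ∈ Finset.range K, ∑ k ∈ Finset.range (m + 1),
          (cf R k * cf R (m - k)) • (L ^ k) ((M ^ (m - k)) f) :=
        Finset.sum_congr rfl fun m _ => hterm m
    _ = ∑ m ∈ Finset.range K, ∑ k ∈ Finset.range (K - m),
          (cf R m * cf R k) • (L ^ m) ((M ^ k) f) :=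
        Finset.sum_range_diag_flip K fun a b => (cf R a * cf R b) • (L ^ a) ((M ^ b) f)
    _ = ∑ m ∈ Finset.range K, ∑ k ∈ Finset.range K,
          (cf R m * cf R k) • (L ^ m) ((M ^ k) f) := by
        refine Finset.sum_congr rfl fun m hm => ?_
        refine Finset.sum_subset ?_ ?_
        · exact Finset.range_subset_range.mpr (by omega)
        · intro k _ hk2
          rw [hvanish m k (by simp only [Finset.mem_range, not_lt] at hk2 ⊢; omega), smul_zero]

lemma expE_zero (f : MvPolynomial σ R) :
    expE (0 : Module.End R (MvPolynomial σ R)) f = f := by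
  rw [expE, finsum_eq_single _ 0]
  · simp
  · intro m hm
    rw [zero_pow hm]
    simp

lemma expE_map_add {L : Module.End R (MvPolynomial σ R)} (hL : SO L)
    (f g : MvPolynomial σ R) : expE L (f + g) = expE L f + expE L g := by
  set N := max f.totalDegree g.totalDegree + 1 with hN
  have h1 : f.totalDegree < N := by omega
  have h2 : g.totalDegree < N := by omega
  have h3 : (f + g).totalDegree < N :=
    lt_of_le_of_lt (totalDegree_add f g) (by omega)
  rw [expE_eq_sum hL f h1, expE_eq_sum hL g h2, expE_eq_sum hL (f + g) h3,
    ← Finset.sum_add_distrib]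
  exact Finset.sum_congr rfl fun m _ => by rw [map_add, smul_add]

lemma expE_map_smul {L : Module.End R (MvPolynomial σ R)} (hL : SO L)
    (r : R) (f : MvPolynomial σ R) : expE L (r • f) = r • expE L f := by
  set N := f.totalDegree + 1 with hN
  have h1 : f.totalDegree < N := by omega
  have h2 : (r • f).totalDegree < N :=
    lt_of_le_of_lt (totalDegree_smul_le r f) (by omega)
  rw [expE_eq_sum hL f h1, expE_eq_sum hL (r • f) h2, Finset.smul_sum]
  exact Finset.sum_congr rfl fun m _ => by rw [map_smul, smul_comm]

end StarAux
end C
section D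

namespace StarAux

variable {R : Type*} [CommRing R] [Algebra ℚ R] {σ : Type*} {n : ℕ}

noncomputable def half (R : Type*) [CommRing R] [Algebra ℚ R] : R :=
  algebraMap ℚ R (2⁻¹ : ℚ)

/-- generic operator `q • Σ_{i,j} A i j • ∂_{φ i} ∂_{ψ j}` -/
noncomputable def bigOp (q : R) (A : Matrix (Fin n) (Fin n) R) (φ ψ : Fin n → σ) :
    Module.End R (MvPolynomial σ R) :=
  q • ∑ i : Fin n, ∑ j : Fin n, A i j • (pdE (φ i) * pdE (ψ j))

lemma bigOp_apply (q : R) (A : Matrix (Fin n) (Fin n) R) (φ ψ : Fin n → σ)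
    (f : MvPolynomial σ R) :
    bigOp q A φ ψ f = q • ∑ i : Fin n, ∑ j : Fin n,
      A i j • pderiv (φ i) (pderiv (ψ j) f) := by
  simp only [bigOp, LinearMap.smul_apply, LinearMap.sum_apply, Module.End.mul_apply, pdE_apply]

lemma SO_bigOp (q : R) (A : Matrix (Fin n) (Fin n) R) (φ ψ : Fin n → σ) :
    SO (bigOp q A φ ψ) :=
  (SO.sum fun i _ => SO.sum fun j _ => (SO.pp (φ i) (ψ j)).smul _).smul q

lemma commute_pp_pp (a b c d : σ) :
    Commute (pdE (R := R) a * pdE b) (pdE c * pdE d) := by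
  have h1 : Commute (pdE (R := R) a * pdE b) (pdE c) :=
    (pdE_commute a c).mul_left (pdE_commute b c)
  have h2 : Commute (pdE (R := R) a * pdE b) (pdE d) :=
    (pdE_commute a d).mul_left (pdE_commute b d)
  exact h1.mul_right h2

lemma commute_bigOp (q r : R) (A B : Matrix (Fin n) (Fin n) R)
    (φ ψ φ' ψ' : Fin n → σ) :
    Commute (bigOp q A φ ψ) (bigOp r B φ' ψ') := by
  apply Commute.smul_left
  apply Commute.smul_right
  apply Commute.sum_left
  intro i _
  apply Commute.sum_left
  intro j _
  apply Commute.sum_right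
  intro a _
  apply Commute.sum_right
  intro b _
  exact ((commute_pp_pp _ _ _ _).smul_left _).smul_right _

lemma bigOp_add (q : R) (A B : Matrix (Fin n) (Fin n) R) (φ ψ : Fin n → σ) :
    bigOp q (A + B) φ ψ = bigOp q A φ ψ + bigOp q B φ ψ := by
  simp only [bigOp, Matrix.add_apply, add_smul, Finset.sum_add_distrib, smul_add]

lemma bigOp_zero (q : R) (φ ψ : Fin n → σ) :
    bigOp q (0 : Matrix (Fin n) (Fin n) R) φ ψ = 0 := by
  simp [bigOp]

/-- the operators -/
noncomputable def GE (A : Matrix (Fin n) (Fin n) R) :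
    Module.End R (MvPolynomial (Fin n) R) := bigOp (half R) A id id

noncomputable def GxE (A : Matrix (Fin n) (Fin n) R) :
    Module.End R (MvPolynomial (Fin n ⊕ Fin n) R) := bigOp (half R) A Sum.inl Sum.inl

noncomputable def GyE (A : Matrix (Fin n) (Fin n) R) :
    Module.End R (MvPolynomial (Fin n ⊕ Fin n) R) := bigOp (half R) A Sum.inr Sum.inr

noncomputable def PiE (A : Matrix (Fin n) (Fin n) R) :
    Module.End R (MvPolynomial (Fin n ⊕ Fin n) R) := bigOp 1 A Sum.inl Sum.inr

lemma gammaOp_eq (A : Matrix (Fin n) (Fin n) R) (f : MvPolynomial (Fin n) R) :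
    gammaOp A f = GE A f := by
  rw [GE, bigOp_apply, gammaOp, half, algebraMap_smul]
  rfl

lemma topT_eq (A : Matrix (Fin n) (Fin n) R) (f : MvPolynomial (Fin n) R) :
    topT A f = expE (GE A) f := by
  rw [topT, expE]
  apply finsum_congr
  intro m
  have hfun : gammaOp A = ⇑(GE A) := funext (gammaOp_eq A)
  rw [hfun, ← Module.End.pow_apply, cf, algebraMap_smul]

end StarAux
end D
section E

namespace StarAux

variable {R : Type*} [CommRing R] [Algebra ℚ R] {n : ℕ}

/-- the multiplication map: substitute both variable groups by `X` -/
noncomputable def muE (n : ℕ) (R : Type*) [CommRing R] :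
    MvPolynomial (Fin n ⊕ Fin n) R →ₐ[R] MvPolynomial (Fin n) R :=
  aeval (Sum.elim X X)

noncomputable def iotaE (n : ℕ) (R : Type*) [CommRing R] :
    MvPolynomial (Fin n) R →ₐ[R] MvPolynomial (Fin n ⊕ Fin n) R :=
  rename Sum.inl

noncomputable def kappaE (n : ℕ) (R : Type*) [CommRing R] :
    MvPolynomial (Fin n) R →ₐ[R] MvPolynomial (Fin n ⊕ Fin n) R :=
  rename Sum.inr

lemma mu_iota (p : MvPolynomial (Fin n) R) : muE n R (iotaE n R p) = p := by
  rw [muE, iotaE, aeval_rename, Sum.elim_comp_inl, aeval_X_left_apply]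

lemma mu_kappa (p : MvPolynomial (Fin n) R) : muE n R (kappaE n R p) = p := by
  rw [muE, kappaE, aeval_rename, Sum.elim_comp_inr, aeval_X_left_apply]

lemma pderiv_inl_kappa (a : Fin n) (q : MvPolynomial (Fin n) R) :
    pderiv (Sum.inl a) (kappaE n R q) = 0 := by
  classical
  apply pderiv_eq_zero_of_notMem_vars
  intro hmem
  have := vars_rename Sum.inr q hmem
  simp only [Finset.mem_image] at this
  obtain ⟨x, -, hx⟩ := this
  exact Sum.inr_ne_inl hx

lemma pderiv_inr_iota (a : Fin n) (q : MvPolynomial (Fin n) R) :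
    pderiv (Sum.inr a) (iotaE n R q) = 0 := by
  classical
  apply pderiv_eq_zero_of_notMem_vars
  intro hmem
  have := vars_rename Sum.inl q hmem
  simp only [Finset.mem_image] at this
  obtain ⟨x, -, hx⟩ := this
  exact Sum.inl_ne_inr hx

lemma pderiv_inl_iota (a : Fin n) (p : MvPolynomial (Fin n) R) :
    pderiv (Sum.inl a) (iotaE n R p) = iotaE n R (pderiv a p) :=
  pderiv_rename Sum.inl_injective a p

lemma pderiv_inr_kappa (a : Fin n) (p : MvPolynomial (Fin n) R) :
    pderiv (Sum.inr a) (kappaE n R p) = kappaE n R (pderiv a p) :=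
  pderiv_rename Sum.inr_injective a p

lemma pderiv_inl_prod (a : Fin n) (p q : MvPolynomial (Fin n) R) :
    pderiv (Sum.inl a) (iotaE n R p * kappaE n R q) =
      iotaE n R (pderiv a p) * kappaE n R q := by
  rw [pderiv_mul, pderiv_inl_iota, pderiv_inl_kappa, mul_zero, add_zero]

lemma pderiv_inr_prod (a : Fin n) (p q : MvPolynomial (Fin n) R) :
    pderiv (Sum.inr a) (iotaE n R p * kappaE n R q) =
      iotaE n R p * kappaE n R (pderiv a q) := by
  rw [pderiv_mul, pderiv_inr_iota, pderiv_inr_kappa, zero_mul, zero_add]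

lemma PiE_prod (A : Matrix (Fin n) (Fin n) R) (p q : MvPolynomial (Fin n) R) :
    PiE A (iotaE n R p * kappaE n R q) =
      ∑ a : Fin n, ∑ b : Fin n,
        A a b • (iotaE n R (pderiv a p) * kappaE n R (pderiv b q)) := by
  rw [PiE, bigOp_apply, one_smul]
  refine Finset.sum_congr rfl fun a _ => Finset.sum_congr rfl fun b _ => ?_
  rw [pderiv_inr_prod, pderiv_inl_prod]

lemma pdMulti_cons {k : ℕ} (a : Fin n) (i : Fin k → Fin n) (f : MvPolynomial (Fin n) R) :
    pdMulti (Fin.cons a i) f = pdMulti i (pderiv a f) := by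
  simp only [pdMulti, List.ofFn_succ, Fin.cons_zero, Fin.cons_succ, List.foldl_cons]

lemma PiE_pow_prod (A : Matrix (Fin n) (Fin n) R) (k : ℕ)
    (f g : MvPolynomial (Fin n) R) :
    (PiE A ^ k) (iotaE n R f * kappaE n R g) =
      ∑ i : Fin k → Fin n, ∑ j : Fin k → Fin n,
        (∏ r, A (i r) (j r)) • (iotaE n R (pdMulti i f) * kappaE n R (pdMulti j g)) := by
  induction k generalizing f g with
  | zero =>
      simp [pdMulti, Finset.univ_unique, List.ofFn_zero]
  | succ k ih =>
      rw [pow_succ, Module.End.mul_apply, PiE_prod, map_sum]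
      simp only [map_sum, map_smul, ih]
      have hre : ∀ (F : (Fin (k + 1) → Fin n) → MvPolynomial (Fin n ⊕ Fin n) R),
          ∑ i', F i' = ∑ a : Fin n, ∑ i : Fin k → Fin n, F (Fin.cons a i) := by
        intro F
        rw [← Equiv.sum_comp (Fin.consEquiv fun _ => Fin n) F, Fintype.sum_prod_type]
        rfl
      simp only [hre]
      simp only [Fin.prod_univ_succ, Fin.cons_zero, Fin.cons_succ, pdMulti_cons,
        Finset.smul_sum, smul_smul]
      refine Finset.sum_congr rfl fun a _ => ?_
      rw [Finset.sum_comm]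

end StarAux
end E
section F

namespace StarAux

variable {R : Type*} [CommRing R] [Algebra ℚ R] {n : ℕ}

lemma SO_PiE (A : Matrix (Fin n) (Fin n) R) : SO (PiE A) := SO_bigOp _ _ _ _
lemma SO_GE (A : Matrix (Fin n) (Fin n) R) : SO (GE A) := SO_bigOp _ _ _ _
lemma SO_GxE (A : Matrix (Fin n) (Fin n) R) : SO (GxE A) := SO_bigOp _ _ _ _
lemma SO_GyE (A : Matrix (Fin n) (Fin n) R) : SO (GyE A) := SO_bigOp _ _ _ _

lemma mstar_eq (A : Matrix (Fin n) (Fin n) R) (f g : MvPolynomial (Fin n) R) :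
    mstar A f g = muE n R (expE (PiE A) (iotaE n R f * kappaE n R g)) := by
  set w := iotaE n R f * kappaE n R g with hw
  set N := w.totalDegree + 1 with hN
  have hso : SO (PiE A) := SO_PiE A
  have hterm : ∀ k : ℕ,
      ((k.factorial : ℚ)⁻¹ • ∑ i : Fin k → Fin n, ∑ j : Fin k → Fin n,
        (∏ r, A (i r) (j r)) • (pdMulti i f * pdMulti j g)) =
      cf R k • muE n R ((PiE A ^ k) w) := by
    intro k
    rw [PiE_pow_prod, map_sum, cf, algebraMap_smul]
    congr 1
    refine Finset.sum_congr rfl fun i _ => ?_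
    rw [map_sum]
    refine Finset.sum_congr rfl fun j _ => ?_
    rw [map_smul, map_mul, mu_iota, mu_kappa]
  rw [mstar, finsum_congr hterm]
  rw [finsum_eq_sum_of_support_subset _ (s := Finset.range N) ?hsub]
  case hsub =>
    intro k hk
    simp only [Function.mem_support, ne_eq] at hk
    simp only [Finset.coe_range, Set.mem_Iio]
    by_contra hc
    exact hk (by rw [hso.pow_eq_zero (by omega), map_zero, smul_zero])
  rw [expE_eq_sum hso w (show w.totalDegree < N by omega), map_sum]
  exact Finset.sum_congr rfl fun k _ => (map_smul _ _ _).symm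

lemma pderiv_mu (i : Fin n) (h : MvPolynomial (Fin n ⊕ Fin n) R) :
    pderiv i (muE n R h) =
      muE n R (pderiv (Sum.inl i) h) + muE n R (pderiv (Sum.inr i) h) := by
  classical
  induction h using MvPolynomial.induction_on with
  | C a => simp [muE]
  | add p q hp hq =>
      simp only [map_add, hp, hq]
      abel
  | mul_X p s ih =>
      cases s with
      | inl j =>
          simp only [map_mul, pderiv_mul, map_add, muE, aeval_X, Sum.elim_inl,
            Sum.elim_inr] at ih ⊢
          simp only [pderiv_X, Pi.single_apply, Sum.inl.injEq, reduceCtorEq,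
            if_false, mul_zero, add_zero, map_zero, apply_ite (aeval (Sum.elim X X)),
            map_one, ih]
          ring
      | inr j =>
          simp only [map_mul, pderiv_mul, map_add, muE, aeval_X, Sum.elim_inl,
            Sum.elim_inr] at ih ⊢
          simp only [pderiv_X, Pi.single_apply, Sum.inr.injEq, reduceCtorEq,
            if_false, mul_zero, add_zero, map_zero, apply_ite (aeval (Sum.elim X X)),
            map_one, ih]
          ring

end StarAux
end F
section G

namespace StarAux

variable {R : Type*} [CommRing R] [Algebra ℚ R] {n : ℕ}

lemma half_add_half : half R + half R = 1 := by
  rw [half, ← map_add]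
  norm_num

lemma GE_mu {C : Matrix (Fin n) (Fin n) R} (hC : C.transpose = C)
    (h : MvPolynomial (Fin n ⊕ Fin n) R) :
    GE C (muE n R h) = muE n R ((GxE C + GyE C + PiE C) h) := by
  have hsym : ∀ i j, C j i = C i j := fun i j => by
    conv_rhs => rw [← hC]
    rfl
  have hmu_big : ∀ (q : R) (φ ψ : Fin n → Fin n ⊕ Fin n),
      muE n R (bigOp q C φ ψ h) =
        q • ∑ i : Fin n, ∑ j : Fin n,
          C i j • muE n R (pderiv (φ i) (pderiv (ψ j) h)) := by
    intro q φ ψ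
    rw [bigOp_apply, map_smul, map_sum]
    congr 1
    refine Finset.sum_congr rfl fun i _ => ?_
    rw [map_sum]
    exact Finset.sum_congr rfl fun j _ => map_smul _ _ _
  have hder : ∀ i j : Fin n, pderiv (R := R) i (pderiv j (muE n R h)) =
      muE n R (pderiv (Sum.inl i) (pderiv (Sum.inl j) h)) +
      muE n R (pderiv (Sum.inl i) (pderiv (Sum.inr j) h)) +
      muE n R (pderiv (Sum.inr i) (pderiv (Sum.inl j) h)) +
      muE n R (pderiv (Sum.inr i) (pderiv (Sum.inr j) h)) := by
    intro i j
    rw [pderiv_mu, map_add, pderiv_mu, pderiv_mu]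
    abel
  rw [LinearMap.add_apply, LinearMap.add_apply, map_add, map_add,
    GxE, GyE, PiE, hmu_big, hmu_big, hmu_big, GE, bigOp_apply]
  simp only [hder, id_eq, smul_add, Finset.sum_add_distrib, one_smul]
  have h23 : (∑ i : Fin n, ∑ j : Fin n,
        C i j • muE n R (pderiv (Sum.inr i) (pderiv (Sum.inl j) h))) =
      ∑ i : Fin n, ∑ j : Fin n,
        C i j • muE n R (pderiv (Sum.inl i) (pderiv (Sum.inr j) h)) := by
    rw [Finset.sum_comm]
    refine Finset.sum_congr rfl fun i _ => Finset.sum_congr rfl fun j _ => ?_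
    rw [hsym, pderiv_comm]
  rw [h23]
  conv_rhs => rw [← one_smul R (∑ i : Fin n, ∑ j : Fin n,
    C i j • muE n R (pderiv (Sum.inl i) (pderiv (Sum.inr j) h))), ← half_add_half, add_smul]
  abel

end StarAux
end G
section H

namespace StarAux

variable {R : Type*} [CommRing R] [Algebra ℚ R] {n : ℕ}

lemma SO_K (C : Matrix (Fin n) (Fin n) R) : SO (GxE C + GyE C + PiE C) :=
  ((SO_GxE C).add (SO_GyE C)).add (SO_PiE C)

lemma GE_pow_mu {C : Matrix (Fin n) (Fin n) R} (hC : C.transpose = C) (m : ℕ)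
    (h : MvPolynomial (Fin n ⊕ Fin n) R) :
    (GE C ^ m) (muE n R h) = muE n R (((GxE C + GyE C + PiE C) ^ m) h) := by
  induction m generalizing h with
  | zero => simp
  | succ m ih =>
      rw [pow_succ, Module.End.mul_apply, pow_succ, Module.End.mul_apply,
        GE_mu hC, ih]

lemma expE_GE_mu {C : Matrix (Fin n) (Fin n) R} (hC : C.transpose = C)
    (h : MvPolynomial (Fin n ⊕ Fin n) R) :
    expE (GE C) (muE n R h) = muE n R (expE (GxE C + GyE C + PiE C) h) := by
  set N := max (muE n R h).totalDegree h.totalDegree + 1 with hN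
  have h1 : (muE n R h).totalDegree < N := by omega
  have h2 : h.totalDegree < N := by omega
  rw [expE_eq_sum (SO_GE C) _ h1, expE_eq_sum (SO_K C) h h2, map_sum]
  refine Finset.sum_congr rfl fun m _ => ?_
  rw [GE_pow_mu hC, map_smul]

lemma GxE_prod (C : Matrix (Fin n) (Fin n) R) (p q : MvPolynomial (Fin n) R) :
    GxE C (iotaE n R p * kappaE n R q) = iotaE n R (GE C p) * kappaE n R q := by
  simp only [GxE, GE, bigOp_apply, id_eq, pderiv_inl_prod, map_smul, map_sum,
    smul_mul_assoc, Finset.sum_mul]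

lemma GyE_prod (C : Matrix (Fin n) (Fin n) R) (p q : MvPolynomial (Fin n) R) :
    GyE C (iotaE n R p * kappaE n R q) = iotaE n R p * kappaE n R (GE C q) := by
  simp only [GyE, GE, bigOp_apply, id_eq, pderiv_inr_prod, map_smul, map_sum,
    mul_smul_comm, Finset.mul_sum]

lemma GxE_pow_prod (C : Matrix (Fin n) (Fin n) R) (m : ℕ)
    (p q : MvPolynomial (Fin n) R) :
    (GxE C ^ m) (iotaE n R p * kappaE n R q) =
      iotaE n R ((GE C ^ m) p) * kappaE n R q := by
  induction m generalizing p with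
  | zero => simp
  | succ m ih =>
      rw [pow_succ, Module.End.mul_apply, pow_succ, Module.End.mul_apply,
        GxE_prod, ih]

lemma GyE_pow_prod (C : Matrix (Fin n) (Fin n) R) (m : ℕ)
    (p q : MvPolynomial (Fin n) R) :
    (GyE C ^ m) (iotaE n R p * kappaE n R q) =
      iotaE n R p * kappaE n R ((GE C ^ m) q) := by
  induction m generalizing q with
  | zero => simp
  | succ m ih =>
      rw [pow_succ, Module.End.mul_apply, pow_succ, Module.End.mul_apply,
        GyE_prod, ih]

lemma expE_GxE_prod (C : Matrix (Fin n) (Fin n) R) (p q : MvPolynomial (Fin n) R) :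
    expE (GxE C) (iotaE n R p * kappaE n R q) =
      iotaE n R (expE (GE C) p) * kappaE n R q := by
  set N := p.totalDegree + 1 with hN
  rw [expE]
  rw [finsum_eq_sum_of_support_subset _ (s := Finset.range N) ?hsub]
  case hsub =>
    intro m hm
    simp only [Function.mem_support, ne_eq] at hm
    simp only [Finset.coe_range, Set.mem_Iio]
    by_contra hc
    refine hm ?_
    rw [GxE_pow_prod, (SO_GE C).pow_eq_zero (by omega), map_zero, zero_mul, smul_zero]
  rw [expE_eq_sum (SO_GE C) p (show p.totalDegree < N by omega), map_sum,
    Finset.sum_mul]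
  refine Finset.sum_congr rfl fun m _ => ?_
  rw [GxE_pow_prod, map_smul, smul_mul_assoc]

lemma expE_GyE_prod (C : Matrix (Fin n) (Fin n) R) (p q : MvPolynomial (Fin n) R) :
    expE (GyE C) (iotaE n R p * kappaE n R q) =
      iotaE n R p * kappaE n R (expE (GE C) q) := by
  set N := q.totalDegree + 1 with hN
  rw [expE]
  rw [finsum_eq_sum_of_support_subset _ (s := Finset.range N) ?hsub]
  case hsub =>
    intro m hm
    simp only [Function.mem_support, ne_eq] at hm
    simp only [Finset.coe_range, Set.mem_Iio]
    by_contra hc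
    refine hm ?_
    rw [GyE_pow_prod, (SO_GE C).pow_eq_zero (by omega), map_zero, mul_zero, smul_zero]
  rw [expE_eq_sum (SO_GE C) q (show q.totalDegree < N by omega), map_sum,
    Finset.mul_sum]
  refine Finset.sum_congr rfl fun m _ => ?_
  rw [GyE_pow_prod, map_smul, mul_smul_comm]

/-- main intertwining lemma -/
lemma key (B C : Matrix (Fin n) (Fin n) R) (hC : C.transpose = C)
    (f g : MvPolynomial (Fin n) R) :
    topT C (mstar B f g) = mstar (B + C) (topT C f) (topT C g) := by
  set w := iotaE n R f * kappaE n R g with hw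
  have cxp : Commute (GxE C) (PiE B) := commute_bigOp _ _ _ _ _ _ _ _
  have cyp : Commute (GyE C) (PiE B) := commute_bigOp _ _ _ _ _ _ _ _
  have cpp : Commute (PiE C) (PiE B) := commute_bigOp _ _ _ _ _ _ _ _
  have cpx : Commute (PiE (B + C)) (GxE C) := commute_bigOp _ _ _ _ _ _ _ _
  have cpy : Commute (PiE (B + C)) (GyE C) := commute_bigOp _ _ _ _ _ _ _ _
  have hcomm1 : Commute (GxE C + GyE C + PiE C) (PiE B) :=
    (cxp.add_left cyp).add_left cpp
  have hcomm2 : Commute (PiE (B + C)) (GxE C + GyE C) := cpx.add_right cpy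
  have hcomm3 : Commute (GxE C) (GyE C) := commute_bigOp _ _ _ _ _ _ _ _
  have harr : (GxE C + GyE C + PiE C) + PiE B = PiE (B + C) + (GxE C + GyE C) := by
    have : PiE (B + C) = PiE B + PiE C := bigOp_add _ _ _ _ _
    rw [this]
    abel
  calc topT C (mstar B f g)
      = expE (GE C) (muE n R (expE (PiE B) w)) := by rw [topT_eq, mstar_eq]
    _ = muE n R (expE (GxE C + GyE C + PiE C) (expE (PiE B) w)) := expE_GE_mu hC _
    _ = muE n R (expE ((GxE C + GyE C + PiE C) + PiE B) w) := by
        rw [← expE_add (SO_K C) (SO_PiE B) hcomm1]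
    _ = muE n R (expE (PiE (B + C) + (GxE C + GyE C)) w) := by rw [harr]
    _ = muE n R (expE (PiE (B + C)) (expE (GxE C + GyE C) w)) := by
        rw [expE_add (SO_PiE (B + C)) ((SO_GxE C).add (SO_GyE C)) hcomm2]
    _ = muE n R (expE (PiE (B + C)) (expE (GxE C) (expE (GyE C) w))) := by
        rw [expE_add (SO_GxE C) (SO_GyE C) hcomm3]
    _ = muE n R (expE (PiE (B + C))
          (iotaE n R (expE (GE C) f) * kappaE n R (expE (GE C) g))) := by
        rw [hw, expE_GyE_prod, expE_GxE_prod]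
    _ = mstar (B + C) (topT C f) (topT C g) := by
        rw [mstar_eq, topT_eq, topT_eq]

lemma expE_one {L : Module.End R (MvPolynomial (Fin n) R)} (hL : SO L) :
    expE L (1 : MvPolynomial (Fin n) R) = 1 := by
  rw [expE, finsum_eq_single _ 0]
  · simp
  · intro m hm
    obtain ⟨k, rfl⟩ : ∃ k, m = k + 1 := ⟨m - 1, by omega⟩
    rw [pow_succ, Module.End.mul_apply, hL.2 1 (by simp), map_zero,
      smul_zero]

lemma topT_cancel (A B : Matrix (Fin n) (Fin n) R) (hAB : A + B = 0)
    (f : MvPolynomial (Fin n) R) : topT A (topT B f) = f := by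
  rw [topT_eq, topT_eq, ← expE_add (SO_GE A) (SO_GE B) (commute_bigOp _ _ _ _ _ _ _ _)]
  have hGE : GE A + GE B = (0 : Module.End R (MvPolynomial (Fin n) R)) := by
    rw [GE, GE, ← bigOp_add, hAB, bigOp_zero]
  rw [hGE, expE_zero]

end StarAux
end H

/-- For symmetric `C`, `T_C` intertwines `⋆_B` and `⋆_{B+C}`; in particular for
symmetric `P, Q`, `T_{P-Q}` is an isomorphism of unital `R`-algebras from
`(MvPolynomial (Fin n) R, ⋆_Q)` onto `(MvPolynomial (Fin n) R, ⋆_P)` with inverse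
`T_{Q-P}`. -/
theorem topT_algebra_iso {n : ℕ} {R : Type*} [CommRing R] [Algebra ℚ R]
    (B C : Matrix (Fin n) (Fin n) R) (hC : C.transpose = C) :
    (∀ f g : MvPolynomial (Fin n) R,
        topT C (mstar B f g) = mstar (B + C) (topT C f) (topT C g)) ∧
    (∀ P Q : Matrix (Fin n) (Fin n) R, P.transpose = P → Q.transpose = Q →
      IsLinearMap R (topT (P - Q)) ∧
      topT (P - Q) (1 : MvPolynomial (Fin n) R) = 1 ∧
      (∀ f g : MvPolynomial (Fin n) R,
          topT (P - Q) (mstar Q f g) = mstar P (topT (P - Q) f) (topT (P - Q) g)) ∧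
      Function.Bijective (topT (P - Q) : MvPolynomial (Fin n) R → MvPolynomial (Fin n) R) ∧
      topT (Q - P) ∘ topT (P - Q) =
        (id : MvPolynomial (Fin n) R → MvPolynomial (Fin n) R) ∧
      topT (P - Q) ∘ topT (Q - P) =
        (id : MvPolynomial (Fin n) R → MvPolynomial (Fin n) R)) := by
  constructor
  · exact StarAux.key B C hC
  · intro P Q hP hQ
    have hPQ : (P - Q).transpose = P - Q := by rw [Matrix.transpose_sub, hP, hQ]
    have hcan1 : ∀ f, topT (Q - P) (topT (P - Q) f) = f :=
      StarAux.topT_cancel _ _ (by abel)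
    have hcan2 : ∀ f, topT (P - Q) (topT (Q - P) f) = f :=
      StarAux.topT_cancel _ _ (by abel)
    refine ⟨?_, ?_, ?_, ?_, ?_, ?_⟩
    · constructor
      · intro f g
        rw [StarAux.topT_eq, StarAux.topT_eq, StarAux.topT_eq]
        exact StarAux.expE_map_add (StarAux.SO_GE _) f g
      · intro r f
        rw [StarAux.topT_eq, StarAux.topT_eq]
        exact StarAux.expE_map_smul (StarAux.SO_GE _) r f
    · rw [StarAux.topT_eq]
      exact StarAux.expE_one (StarAux.SO_GE _)
    · intro f g
      have h := StarAux.key Q (P - Q) hPQ f g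
      rwa [show Q + (P - Q) = P by abel] at h
    · exact Function.bijective_iff_has_inverse.mpr ⟨topT (Q - P), hcan1, hcan2⟩
    · funext f
      exact hcan1 f
    · funext f
      exact hcan2 f
end

section
/- In R[X], for all natural numbers m, n and every a ∈ R, the star product of monomials is given explicitly by X^m ⋆_a X^n = Σ_{k=0}^{min(m,n)} k! · binom(m,k) · binom(n,k) · a^k · X^{m+n−2k}. -/
open Polynomial

/-- The star product `f ⋆_a g = Σ_k (a^k/k!) f^{(k)} g^{(k)}` on `R[X]`. -/
noncomputable def ustar {R : Type*} [CommRing R] [Algebra ℚ R] (a : R)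
    (f g : R[X]) : R[X] :=
  ∑ᶠ k : ℕ, (k.factorial : ℚ)⁻¹ •
    (a ^ k • ((⇑Polynomial.derivative)^[k] f * (⇑Polynomial.derivative)^[k] g))

/-- The operator `T_a f = Σ_m (a^m/(2^m m!)) f^{(2m)}` on `R[X]`. -/
noncomputable def uT {R : Type*} [CommRing R] [Algebra ℚ R] (a : R)
    (f : R[X]) : R[X] :=
  ∑ᶠ m : ℕ, ((2 : ℚ) ^ m * m.factorial)⁻¹ •
    (a ^ m • (⇑Polynomial.derivative)^[2 * m] f)

/-! The `k`-th summand vanishes once `k` exceeds the degree of either factor, and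
`(X^m)^{(k)} = k! · C(m,k) · X^{m-k}`, so one of the two factors `k!` cancels `1/k!`. -/

section StarProduct

variable {R : Type*} [CommRing R] [Algebra ℚ R]

theorem ustar_eq_sum_range (a : R) {f g : R[X]} {p q : ℕ} (hf : f.natDegree ≤ p)
    (hg : g.natDegree ≤ q) :
    ustar a f g = ∑ k ∈ Finset.range (min p q + 1),
      (k.factorial : ℚ)⁻¹ • (a ^ k • (derivative^[k] f * derivative^[k] g)) := by
  refine finsum_eq_sum_of_support_subset _ fun k hk => ?_
  contrapose! hk
  rw [Finset.coe_range, Set.mem_Iio, not_lt, Nat.succ_le_iff] at hk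
  rcases min_lt_iff.mp hk with hp | hq
  · simp [iterate_derivative_eq_zero (hf.trans_lt hp)]
  · simp [iterate_derivative_eq_zero (hg.trans_lt hq)]

theorem inv_factorial_smul_descFactorial_mul_descFactorial (k m n : ℕ) :
    (k.factorial : ℚ)⁻¹ • ((m.descFactorial k * n.descFactorial k : ℕ) : R) =
      ((k.factorial * m.choose k * n.choose k : ℕ) : R) := by
  have hk : (k.factorial : ℚ) ≠ 0 := by exact_mod_cast k.factorial_ne_zero
  rw [Nat.descFactorial_eq_factorial_mul_choose, Nat.descFactorial_eq_factorial_mul_choose,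
    ← map_natCast (algebraMap ℚ R), ← map_natCast (algebraMap ℚ R), Algebra.smul_def,
    ← map_mul]
  congr 1
  push_cast
  field_simp

theorem ustar_term_X_pow_X_pow (a : R) {k m n : ℕ} (hm : k ≤ m) (hn : k ≤ n) :
    (k.factorial : ℚ)⁻¹ • (a ^ k • (derivative^[k] (X ^ m : R[X]) * derivative^[k] (X ^ n))) =
      C ((k.factorial * m.choose k * n.choose k : ℕ) * a ^ k) * X ^ (m + n - 2 * k) := by
  rw [iterate_derivative_X_pow_eq_C_mul, iterate_derivative_X_pow_eq_C_mul,
    mul_mul_mul_comm, ← pow_add, ← C_mul, ← Nat.cast_mul,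
    ← inv_factorial_smul_descFactorial_mul_descFactorial, show m - k + (n - k) = m + n - 2 * k by omega, ← smul_mul_assoc, ← smul_mul_assoc,
    smul_C, smul_C, smul_eq_mul, mul_comm (a ^ k), smul_mul_assoc]

end StarProduct

/-- Explicit formula for the star product of monomials. -/
theorem ustar_X_pow_X_pow {R : Type*} [CommRing R] [Algebra ℚ R] (a : R) (m n : ℕ) :
    ustar a ((X : R[X]) ^ m) ((X : R[X]) ^ n) =
      ∑ k ∈ Finset.range (min m n + 1),
        Polynomial.C ((k.factorial * m.choose k * n.choose k : ℕ) * a ^ k) *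
          (X : R[X]) ^ (m + n - 2 * k) := by
  rw [ustar_eq_sum_range a (natDegree_X_pow_le m) (natDegree_X_pow_le n)]
  refine Finset.sum_congr rfl fun k hk => ?_
  have hk' : k ≤ min m n := Finset.mem_range_succ_iff.mp hk
  exact ustar_term_X_pow_X_pow a (hk'.trans (min_le_left m n)) (hk'.trans (min_le_right m n))
end

section
/- In R[X], for every n ∈ ℕ and every a ∈ R, the n-fold iterated star product X ⋆_a X ⋆_a ⋯ ⋆_a X (n factors, the empty product being the constant polynomial 1) equals T_a(X^n). Consequently its constant coefficient equals 0 when n is odd, and equals ((2k)! / (2^k · k!)) · a^k when n = 2k is even. -/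
open Polynomial

/-- The `n`-fold iterated star product `X ⋆_a ⋯ ⋆_a X` (the empty product is `1`). -/
noncomputable def iterStar {R : Type*} [CommRing R] [Algebra ℚ R] (a : R) : ℕ → R[X]
  | 0 => 1
  | n + 1 => ustar a X (iterStar a n)

section Aux

variable {R : Type*} [CommRing R] [Algebra ℚ R]

private lemma iter_deriv_X_mul_succ (f : R[X]) :
    ∀ k : ℕ, (⇑derivative)^[k + 1] (X * f) =
      X * (⇑derivative)^[k + 1] f + ((k : R[X]) + 1) * (⇑derivative)^[k] f := by
  intro k
  induction k with
  | zero => simp [derivative_mul]; ring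
  | succ k ih =>
    rw [Function.iterate_succ_apply' _ (k + 1) (X * f), ih, derivative_add, derivative_mul,
      derivative_mul, derivative_X, derivative_add, derivative_natCast, derivative_one,
      ← Function.iterate_succ_apply' derivative (k + 1) f,
      ← Function.iterate_succ_apply' derivative k f]
    push_cast
    ring

private lemma iter_deriv_X_mul (f : R[X]) (m : ℕ) :
    (⇑derivative)^[2 * m] (X * f) =
      X * (⇑derivative)^[2 * m] f + ((2 * m : ℕ) : R[X]) * (⇑derivative)^[2 * m - 1] f := by
  cases m with
  | zero => simp
  | succ j =>
    have h1 : 2 * (j + 1) = (2 * j + 1) + 1 := by ring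
    have h2 : 2 * (j + 1) - 1 = 2 * j + 1 := by omega
    rw [h1, iter_deriv_X_mul_succ]
    have h3 : 2 * j + 1 + 1 - 1 = 2 * j + 1 := by omega
    rw [h3]
    push_cast
    ring

private lemma uT_eq_sum (a : R) (f : R[X]) (N : ℕ) (h : f.natDegree < N) :
    uT a f = ∑ m ∈ Finset.range N,
      ((2 : ℚ) ^ m * m.factorial)⁻¹ • (a ^ m • (⇑derivative)^[2 * m] f) := by
  refine finsum_eq_sum_of_support_subset _ fun m hm => ?_
  simp only [Function.mem_support] at hm
  simp only [Finset.coe_range, Set.mem_Iio]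
  by_contra hmN
  push_neg at hmN
  have : (⇑derivative)^[2 * m] f = 0 :=
    Polynomial.iterate_derivative_eq_zero (lt_of_lt_of_le h (hmN.trans (by omega)))
  rw [this] at hm
  simp at hm

private lemma ustar_X (a : R) (g : R[X]) : ustar a X g = X * g + a • derivative g := by
  have hsupp : (Function.support fun k : ℕ => (k.factorial : ℚ)⁻¹ •
      (a ^ k • ((⇑derivative)^[k] X * (⇑derivative)^[k] g))) ⊆ (Finset.range 2 : Finset ℕ) := by
    intro k hk
    simp only [Function.mem_support] at hk
    simp only [Finset.coe_range, Set.mem_Iio]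
    by_contra hk2
    push_neg at hk2
    rw [Polynomial.iterate_derivative_X (by omega)] at hk
    simp at hk
  rw [ustar, finsum_eq_sum_of_support_subset _ hsupp]
  simp [Finset.sum_range_succ]

private lemma key_scalar (m : ℕ) :
    ((2 : ℚ) ^ (m + 1) * (m + 1).factorial)⁻¹ * ((2 * (m + 1) : ℕ) : ℚ)
      = ((2 : ℚ) ^ m * m.factorial)⁻¹ := by
  have h1 : ((m + 1).factorial : ℚ) = (m + 1) * m.factorial := by
    push_cast [Nat.factorial_succ]; ring
  have h2 : (m.factorial : ℚ) ≠ 0 := by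
    exact_mod_cast Nat.factorial_ne_zero m
  have h3 : ((m : ℚ) + 1) ≠ 0 := by positivity
  rw [h1]
  push_cast
  field_simp
  ring

private lemma uT_X_mul (a : R) (f : R[X]) :
    uT a (X * f) = X * uT a f + a • derivative (uT a f) := by
  set N := f.natDegree + 1 with hN
  have hfN : f.natDegree < N + 1 := by omega
  have hXf : (X * f).natDegree < N + 1 :=
    lt_of_le_of_lt (natDegree_mul_le.trans (add_le_add natDegree_X_le le_rfl)) (by omega)
  rw [uT_eq_sum a (X * f) (N + 1) hXf, uT_eq_sum a f (N + 1) hfN]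
  have hderiv : derivative (∑ m ∈ Finset.range (N + 1),
        ((2 : ℚ) ^ m * m.factorial)⁻¹ • (a ^ m • (⇑derivative)^[2 * m] f))
      = ∑ m ∈ Finset.range (N + 1),
        ((2 : ℚ) ^ m * m.factorial)⁻¹ • (a ^ m • (⇑derivative)^[2 * m + 1] f) := by
    rw [derivative_sum]
    refine Finset.sum_congr rfl fun m _ => ?_
    rw [derivative_smul, derivative_smul, ← Function.iterate_succ_apply' derivative]
  rw [hderiv]
  have hterm : ∀ m ∈ Finset.range (N + 1),
      ((2 : ℚ) ^ m * m.factorial)⁻¹ • (a ^ m • (⇑derivative)^[2 * m] (X * f))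
        = X * (((2 : ℚ) ^ m * m.factorial)⁻¹ • (a ^ m • (⇑derivative)^[2 * m] f))
          + (((2 : ℚ) ^ m * m.factorial)⁻¹ * ((2 * m : ℕ) : ℚ)) •
              (a ^ m • (⇑derivative)^[2 * m - 1] f) := by
    intro m _
    rw [iter_deriv_X_mul f m, smul_add, smul_add]
    congr 1
    · rw [mul_smul_comm, mul_smul_comm]
    · rw [← nsmul_eq_mul, ← Nat.cast_smul_eq_nsmul ℚ, smul_comm (a ^ m), smul_smul]
  rw [Finset.sum_congr rfl hterm, Finset.sum_add_distrib, ← Finset.mul_sum]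
  congr 1
  -- second sums
  have hLHS : ∑ m ∈ Finset.range (N + 1),
      (((2 : ℚ) ^ m * m.factorial)⁻¹ * ((2 * m : ℕ) : ℚ)) • (a ^ m • (⇑derivative)^[2 * m - 1] f)
      = ∑ m ∈ Finset.range N,
        ((2 : ℚ) ^ m * m.factorial)⁻¹ • (a ^ (m + 1) • (⇑derivative)^[2 * m + 1] f) := by
    rw [Finset.sum_range_succ']
    have h0 : (((2 : ℚ) ^ 0 * (0 : ℕ).factorial)⁻¹ * ((2 * 0 : ℕ) : ℚ)) •
        (a ^ 0 • (⇑derivative)^[2 * 0 - 1] f) = 0 := by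
      norm_num
    rw [h0, add_zero]
    refine Finset.sum_congr rfl fun m _ => ?_
    have h1 : 2 * (m + 1) - 1 = 2 * m + 1 := by omega
    rw [h1, key_scalar m]
  have hN0 : (⇑derivative)^[2 * N + 1] f = 0 :=
    Polynomial.iterate_derivative_eq_zero (by omega)
  have hRHS : a • ∑ m ∈ Finset.range (N + 1),
      ((2 : ℚ) ^ m * m.factorial)⁻¹ • (a ^ m • (⇑derivative)^[2 * m + 1] f)
      = ∑ m ∈ Finset.range N,
        ((2 : ℚ) ^ m * m.factorial)⁻¹ • (a ^ (m + 1) • (⇑derivative)^[2 * m + 1] f) := by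
    rw [Finset.smul_sum, Finset.sum_range_succ, hN0, smul_zero, smul_zero, smul_zero, add_zero]
    refine Finset.sum_congr rfl fun m _ => ?_
    rw [smul_comm a, smul_smul a, ← pow_succ']
  rw [hLHS, hRHS]

private lemma iterStar_eq (a : R) : ∀ n : ℕ, iterStar a n = uT a ((X : R[X]) ^ n) := by
  intro n
  induction n with
  | zero =>
    show (1 : R[X]) = uT a (X ^ 0)
    rw [pow_zero, uT_eq_sum a 1 1 (by simp)]
    simp
  | succ n ih =>
    show ustar a X (iterStar a n) = uT a (X ^ (n + 1))
    rw [ih, ustar_X, ← uT_X_mul, ← pow_succ']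

private lemma coeff0_term (a : R) (n m : ℕ) (hmn : 2 * m ≠ n) :
    (((2 : ℚ) ^ m * m.factorial)⁻¹ •
      (a ^ m • (⇑derivative)^[2 * m] ((X : R[X]) ^ n))).coeff 0 = 0 := by
  rw [Polynomial.iterate_derivative_X_pow_eq_natCast_mul]
  rcases lt_or_ge n (2 * m) with h | h
  · rw [Nat.descFactorial_eq_zero_iff_lt.2 h]
    simp
  · have hpos : 0 < n - 2 * m := by omega
    rw [Polynomial.coeff_smul, Polynomial.coeff_smul, Polynomial.coeff_natCast_mul,
      Polynomial.coeff_X_pow]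
    simp [(show ¬(0 = n - 2 * m) by omega)]

end Aux

/-- The `n`-fold star product of `X` with itself equals `T_a (X^n)`; its constant
coefficient is `0` for odd `n` and `((2k)!/(2^k k!)) a^k` for `n = 2k`. -/
theorem iterStar_eq_uT {R : Type*} [CommRing R] [Algebra ℚ R] (a : R) (n : ℕ) :
    iterStar a n = uT a ((X : R[X]) ^ n) ∧
    (Odd n → (iterStar a n).coeff 0 = 0) ∧
    (∀ k : ℕ, n = 2 * k →
      (iterStar a n).coeff 0 =
        (((2 * k).factorial : ℚ) / ((2 : ℚ) ^ k * k.factorial)) • a ^ k) := by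
  have heq := iterStar_eq a n
  have hNdeg : ((X : R[X]) ^ n).natDegree < n + 1 :=
    lt_of_le_of_lt (natDegree_pow_le.trans (by simpa using Nat.mul_le_mul_left n natDegree_X_le))
      (by omega)
  have hsum : (iterStar a n).coeff 0 = ∑ m ∈ Finset.range (n + 1),
      (((2 : ℚ) ^ m * m.factorial)⁻¹ •
        (a ^ m • (⇑derivative)^[2 * m] ((X : R[X]) ^ n))).coeff 0 := by
    rw [heq, uT_eq_sum a _ (n + 1) hNdeg, Polynomial.finset_sum_coeff]
  refine ⟨heq, ?_, ?_⟩
  · intro hodd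
    rw [hsum]
    refine Finset.sum_eq_zero fun m _ => coeff0_term a n m ?_
    intro h
    exact (Nat.not_even_iff_odd.mpr hodd) ⟨m, by omega⟩
  · rintro k rfl
    rw [hsum]
    rw [Finset.sum_eq_single k (fun m _ hmk => coeff0_term a (2 * k) m (by omega))
      (fun hk => absurd (Finset.mem_range.mpr (by omega)) hk)]
    rw [Polynomial.iterate_derivative_X_pow_eq_natCast_mul, Nat.sub_self, pow_zero, mul_one,
      Nat.descFactorial_self, Polynomial.coeff_smul, Polynomial.coeff_smul, Polynomial.natCast_coeff_zero]
    simp only [smul_eq_mul]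
    have : a ^ k * ((2 * k).factorial : R) = (((2 * k).factorial : ℕ) : ℚ) • a ^ k := by
      rw [Nat.cast_smul_eq_nsmul, nsmul_eq_mul, mul_comm]
    rw [this, smul_smul, div_eq_mul_inv, mul_comm]
end

section
/- Let R be a (not necessarily commutative) ring and let E, P, G, S, S' ∈ R satisfy E·P = 1 + S and P·E = 1 + S'. In R[[t]], define Q := Σ_{n=0}^∞ (−1)^n · ((P·G)^n · P) · t^n. Then Q is the unique power series satisfying Q = C(P) − C(P·G)·t·Q, and it satisfies the two identities (C(E) + C(G)·t) · Q = 1 + C(S) · (1 − C(G)·t·Q) and Q · (C(E) + C(G)·t) = 1 + (1 − Q·C(G)·t) · C(S'). -/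
/-! The coefficients `qₙ = (-PG)ⁿ P = P (-GP)ⁿ` of `Q` obey the recursions
`qₙ₊₁ = -(PG) qₙ = -qₙ (GP)`, i.e. `Q = C P - C(PG) t Q = C P - Q C(GP) t`, and a power series
satisfying the first equation is determined coefficient by coefficient. Multiplying these
equations by `C E` on the left, resp. on the right, and substituting `EP = 1 + S`,
`PE = 1 + S'` gives the two identities. -/

open PowerSeries

/-- The formal power series `Q = Σ_n (−1)^n ((P·G)^n·P) t^n`. -/
noncomputable def Qser {R : Type*} [Ring R] (P G : R) : PowerSeries R :=
  PowerSeries.mk fun n => (-1) ^ n * ((P * G) ^ n * P)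

namespace PowerSeries

variable {R : Type*} [Ring R]

theorem eq_C_sub_C_mul_X_mul_iff (a b : R) (f : R⟦X⟧) :
    f = C a - C b * X * f ↔ coeff 0 f = a ∧ ∀ n, coeff (n + 1) f = -(b * coeff n f) := by
  constructor
  · intro h
    refine ⟨?_, fun n => ?_⟩
    · rw [h]; simp [mul_assoc]
    · conv_lhs => rw [h]
      simp [mul_assoc, coeff_C_mul, coeff_succ_X_mul]
  · rintro ⟨h0, hsucc⟩
    ext (_ | n)
    · simp [mul_assoc, h0]
    · simp [mul_assoc, coeff_C_mul, coeff_succ_X_mul, hsucc]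

theorem eq_C_sub_mul_C_mul_X_iff (a b : R) (f : R⟦X⟧) :
    f = C a - f * C b * X ↔ coeff 0 f = a ∧ ∀ n, coeff (n + 1) f = -(coeff n f * b) := by
  constructor
  · intro h
    refine ⟨?_, fun n => ?_⟩
    · rw [h]; simp
    · conv_lhs => rw [h]
      simp [coeff_mul_C, coeff_succ_mul_X]
  · rintro ⟨h0, hsucc⟩
    ext (_ | n)
    · simp [h0]
    · simp [coeff_mul_C, coeff_succ_mul_X, hsucc]

theorem eq_of_eq_C_sub_C_mul_X_mul {a b : R} {f g : R⟦X⟧}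
    (hf : f = C a - C b * X * f) (hg : g = C a - C b * X * g) : f = g := by
  obtain ⟨hf0, hf⟩ := (eq_C_sub_C_mul_X_mul_iff a b f).1 hf
  obtain ⟨hg0, hg⟩ := (eq_C_sub_C_mul_X_mul_iff a b g).1 hg
  ext n
  induction n with
  | zero => rw [hf0, hg0]
  | succ n ih => rw [hf, hg, ih]

theorem C_add_C_mul_X_mul_eq {E P G S : R} {Q : R⟦X⟧} (hQ : Q = C P - C (P * G) * X * Q)
    (hEP : E * P = 1 + S) : (C E + C G * X) * Q = 1 + C S * (1 - C G * X * Q) := by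
  have hEQ : C E * Q = C (1 + S) - C ((1 + S) * G) * X * Q := by
    conv_lhs => rw [hQ]
    rw [mul_sub, ← map_mul, hEP, ← mul_assoc, ← mul_assoc, ← map_mul, ← mul_assoc, hEP]
  rw [add_mul, hEQ]
  simp only [map_add, map_mul, map_one]
  noncomm_ring

theorem mul_C_add_C_mul_X_eq {E P G S' : R} {Q : R⟦X⟧} (hQ : Q = C P - Q * C (G * P) * X)
    (hPE : P * E = 1 + S') : Q * (C E + C G * X) = 1 + (1 - Q * C G * X) * C S' := by
  have hQE : Q * C E = C (1 + S') - Q * C (G * (1 + S')) * X := by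
    conv_lhs => rw [hQ]
    rw [sub_mul, ← map_mul, hPE, mul_assoc _ X, ← (commute_X _).eq, ← mul_assoc,
      mul_assoc Q, ← map_mul, mul_assoc G, hPE, mul_assoc Q]
  rw [mul_add, hQE, sub_mul 1, one_mul, mul_assoc (Q * C G), ← (commute_X (C S')).eq]
  simp only [map_add, map_mul, map_one]
  noncomm_ring

end PowerSeries

section

variable {R : Type*} [Ring R]

theorem coeff_Qser (P G : R) (n : ℕ) : coeff n (Qser P G) = (-(P * G)) ^ n * P := by
  rw [Qser, coeff_mk, neg_pow (P * G), mul_assoc]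

theorem Qser_eq_C_sub_C_mul_X_mul (P G : R) :
    Qser P G = C P - C (P * G) * X * Qser P G :=
  (eq_C_sub_C_mul_X_mul_iff _ _ _).2
    ⟨by simp [coeff_Qser], fun n => by simp only [coeff_Qser, pow_succ', mul_assoc, neg_mul]⟩

theorem Qser_eq_C_sub_mul_C_mul_X (P G : R) :
    Qser P G = C P - Qser P G * C (G * P) * X :=
  (eq_C_sub_mul_C_mul_X_iff _ _ _).2
    ⟨by simp [coeff_Qser], fun n => by
      simp only [coeff_Qser, pow_succ, mul_assoc, neg_mul, mul_neg]⟩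

end

/-- `Q` is the unique power series with `Q = C(P) − C(P·G)·t·Q`, and it is a two-sided
inverse of `C(E) + C(G)·t` up to the smoothing terms `S`, `S'`. -/
theorem Qser_spec {R : Type*} [Ring R] (E P G S S' : R)
    (h1 : E * P = 1 + S) (h2 : P * E = 1 + S') :
    (∀ Q' : PowerSeries R,
        Q' = PowerSeries.C P - PowerSeries.C (P * G) * PowerSeries.X * Q' ↔
          Q' = Qser P G) ∧
    (PowerSeries.C E + PowerSeries.C G * PowerSeries.X) * Qser P G =
        1 + PowerSeries.C S *
          (1 - PowerSeries.C G * PowerSeries.X * Qser P G) ∧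
    Qser P G * (PowerSeries.C E + PowerSeries.C G * PowerSeries.X) =
        1 + (1 - Qser P G * PowerSeries.C G * PowerSeries.X) * PowerSeries.C S' :=
  ⟨fun _ => ⟨fun h => eq_of_eq_C_sub_C_mul_X_mul h (Qser_eq_C_sub_C_mul_X_mul P G),
      fun h => h ▸ Qser_eq_C_sub_C_mul_X_mul P G⟩,
    C_add_C_mul_X_mul_eq (Qser_eq_C_sub_C_mul_X_mul P G) h1,
    mul_C_add_C_mul_X_eq (Qser_eq_C_sub_mul_C_mul_X P G) h2⟩
end

section
/- Let R be a (not necessarily commutative) ring and let E, P, G, S, S' ∈ R satisfy E·P = 1 + S and P·E = 1 + S', and set Q := Σ_{n=0}^∞ (−1)^n · ((P·G)^n · P) · t^n ∈ R[[t]]. Then for every two-sided ideal I of R with S ∈ I and S' ∈ I, every coefficient of the power series (C(E) + C(G)·t)·Q − 1 and every coefficient of the power series Q·(C(E) + C(G)·t) − 1 belongs to I. -/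
theorem add_mul_sub_one_of_mul_eq_one_add {A : Type*} [Ring A] {e p g s q : A}
    (hep : e * p = 1 + s) (hq : (1 + p * g) * q = p) : (e + g) * q - 1 = s * (1 - g * q) :=
  calc (e + g) * q - 1 = e * ((1 + p * g) * q) - e * p * (g * q) + g * q - 1 := by noncomm_ring
    _ = s * (1 - g * q) := by rw [hq, hep]; noncomm_ring

theorem mul_add_sub_one_of_mul_eq_one_add {A : Type*} [Ring A] {e p g s q : A}
    (hpe : p * e = 1 + s) (hq : q * (1 + g * p) = p) : q * (e + g) - 1 = (1 - q * g) * s :=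
  calc q * (e + g) - 1 = q * (1 + g * p) * e - q * g * (p * e) + q * g - 1 := by noncomm_ring
    _ = (1 - q * g) * s := by rw [hq, hpe]; noncomm_ring

namespace PowerSeries

variable {R : Type*} [Ring R]

theorem one_add_C_mul_C_mul_X_mul_Qser (P G : R) : (1 + C P * (C G * X)) * Qser P G = C P := by
  rw [← mul_assoc, ← map_mul]
  ext (_ | n)
  · simp [Qser]
  · rw [add_mul, one_mul, mul_assoc, map_add, coeff_C_mul, coeff_succ_X_mul]
    rcases neg_one_pow_eq_or R n with h | h <;> simp [Qser, pow_succ', mul_assoc, h]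

theorem Qser_mul_one_add_C_mul_X_mul_C (P G : R) : Qser P G * (1 + C G * X * C P) = C P := by
  rw [mul_assoc, ← (commute_X _).eq, ← mul_assoc, ← map_mul]
  ext (_ | n)
  · simp [Qser]
  · rw [mul_add, mul_one, ← mul_assoc, map_add, coeff_succ_mul_X, coeff_mul_C]
    rcases neg_one_pow_eq_or R n with h | h <;> simp [Qser, pow_succ, mul_assoc, h]

theorem coeff_C_mul_mem {I : TwoSidedIdeal R} {s : R} (hs : s ∈ I) (f : R⟦X⟧) (n : ℕ) :
    coeff n (C s * f) ∈ I := by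
  rw [coeff_C_mul]; exact I.mul_mem_right _ _ hs

theorem coeff_mul_C_mem {I : TwoSidedIdeal R} {s : R} (hs : s ∈ I) (f : R⟦X⟧) (n : ℕ) :
    coeff n (f * C s) ∈ I := by
  rw [coeff_mul_C]; exact I.mul_mem_left _ _ hs

end PowerSeries

open PowerSeries

/-- Modulo any two-sided ideal containing the smoothing terms `S`, `S'`, the series `Q`
is a two-sided inverse of `C(E) + C(G)·t`. -/
theorem Qser_inverse_mod_ideal {R : Type*} [Ring R] (E P G S S' : R)
    (h1 : E * P = 1 + S) (h2 : P * E = 1 + S')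
    (I : TwoSidedIdeal R) (hS : S ∈ I) (hS' : S' ∈ I) :
    (∀ n : ℕ,
      PowerSeries.coeff (R := R) n
        ((PowerSeries.C (R := R) E + PowerSeries.C (R := R) G * PowerSeries.X) * Qser P G - 1) ∈ I) ∧
    (∀ n : ℕ,
      PowerSeries.coeff (R := R) n
        (Qser P G * (PowerSeries.C (R := R) E + PowerSeries.C (R := R) G * PowerSeries.X) - 1) ∈ I) := by
  have hEP : C E * C P = 1 + C S := by rw [← map_mul, h1, map_add, map_one]
  have hPE : C P * C E = 1 + C S' := by rw [← map_mul, h2, map_add, map_one]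
  constructor
  · rw [add_mul_sub_one_of_mul_eq_one_add hEP (one_add_C_mul_C_mul_X_mul_Qser P G)]
    exact coeff_C_mul_mem hS _
  · rw [mul_add_sub_one_of_mul_eq_one_add hPE (Qser_mul_one_add_C_mul_X_mul_C P G)]
    exact coeff_mul_C_mem hS' _
end
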